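/- For every measurable function f : ℝ^k → ℂ, every η > 1 with κ_η(f) < ∞, and every a, b ∈ ℝ^k and c ∈ ℝ, the function W((a,b),c)f satisfies κ_η(W((a,b),c)f) ≤ 3^η (1 + ‖a‖² + ‖b‖²)^{η/2} κ_η(f). -/

import Mathlib

/-! The rotation `R(k_φ)` intertwines `W((a,b),c)` with the Schrödinger operator of the rotated
point: up to a unimodular phase, `(W((a,b),c)f)_φ(w) = f_φ(w - (cos φ • b + sin φ • a))`. For
`sin φ ≠ 0` this is the substitution `v = u + b` in the oscillatory integral, which completes the
quadratic phase; for `sin φ = 0` it is immediate. The shift has norm at most `√(‖a‖² + ‖b‖²)`, and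
Peetre's inequality `1 + ‖x + y‖² ≤ 2 (1 + ‖x‖²)(1 + ‖y‖²)` moves the weight across it at the cost
of `2^(η/2) ≤ 3^η`. -/

open scoped RealInnerProductSpace
open MeasureTheory
open scoped ENNReal Classical

/-- ℝ^k as a Euclidean space. -/
abbrev E (k : ℕ) := EuclideanSpace ℝ (Fin k)

/-- `e(t) = exp(2πit)`. -/
noncomputable def e (t : ℝ) : ℂ := Complex.exp (2 * Real.pi * Complex.I * t)

/-- The Schrödinger representation:
`[W((a,b),c)f](w) = e(c − ½a·b + a·w) f(w − b)`. -/
noncomputable def W {k : ℕ} (g : (E k × E k) × ℝ) (f : E k → ℂ) : E k → ℂ :=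
  fun w => e (g.2 - (1 / 2) * ⟪g.1.1, g.1.2⟫ + ⟪g.1.1, w⟫) * f (w - g.1.2)

/-- `f_φ := R(k_φ)f`: equal to `f` when `φ ≡ 0 (mod 2π)`, to `w ↦ f(−w)` when
`φ ≡ π (mod 2π)`, and given by the oscillatory integral otherwise. -/
noncomputable def fphi {k : ℕ} (f : E k → ℂ) (φ : ℝ) : E k → ℂ :=
  fun w =>
    if ∃ m : ℤ, φ = 2 * Real.pi * m then f w
    else if ∃ m : ℤ, φ = Real.pi + 2 * Real.pi * m then f (-w)
    else ((|Real.sin φ| ^ (-(k : ℝ) / 2) : ℝ) : ℂ) *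
      ∫ v : E k,
        e (((1 / 2) * (‖w‖ ^ 2 + ‖v‖ ^ 2) * Real.cos φ - ⟪w, v⟫) / Real.sin φ) * f v

/-- `κ_η(f) = sup_{w,φ} (1+‖w‖²)^{η/2} |f_φ(w)|` (valued in `ℝ≥0∞`). -/
noncomputable def kappa {k : ℕ} (η : ℝ) (f : E k → ℂ) : ℝ≥0∞ :=
  ⨆ (w : E k) (φ : ℝ),
    ENNReal.ofReal ((1 + ‖w‖ ^ 2) ^ (η / 2) * ‖fphi f φ w‖)

lemma e_add (x y : ℝ) : e (x + y) = e x * e y := by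
  simp only [e, ← Complex.exp_add]
  push_cast
  ring_nf

lemma norm_e (t : ℝ) : ‖e t‖ = 1 := by
  rw [e, show 2 * Real.pi * Complex.I * t = ((2 * Real.pi * t : ℝ) : ℂ) * Complex.I by push_cast; ring]
  exact Complex.norm_exp_ofReal_mul_I _

lemma cos_sin_of_eq_two_pi_mul {φ : ℝ} (h : ∃ m : ℤ, φ = 2 * Real.pi * m) :
    Real.cos φ = 1 ∧ Real.sin φ = 0 := by
  obtain ⟨m, rfl⟩ := h
  rw [show 2 * Real.pi * m = m * (2 * Real.pi) by ring]
  exact ⟨Real.cos_int_mul_two_pi m, by simpa using Real.sin_add_int_mul_two_pi 0 m⟩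

lemma cos_sin_of_eq_pi_add_two_pi_mul {φ : ℝ} (h : ∃ m : ℤ, φ = Real.pi + 2 * Real.pi * m) :
    Real.cos φ = -1 ∧ Real.sin φ = 0 := by
  obtain ⟨m, rfl⟩ := h
  rw [show Real.pi + 2 * Real.pi * m = Real.pi + m * (2 * Real.pi) by ring,
    Real.cos_add_int_mul_two_pi, Real.sin_add_int_mul_two_pi]
  exact ⟨Real.cos_pi, Real.sin_pi⟩

lemma sin_ne_zero_of_ne_int_mul_pi {φ : ℝ} (h₀ : ¬ ∃ m : ℤ, φ = 2 * Real.pi * m)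
    (h₁ : ¬ ∃ m : ℤ, φ = Real.pi + 2 * Real.pi * m) : Real.sin φ ≠ 0 := by
  rw [Ne, Real.sin_eq_zero_iff]
  rintro ⟨n, hn⟩
  rcases Int.even_or_odd' n with ⟨m, rfl | rfl⟩
  · exact h₀ ⟨m, by rw [← hn]; push_cast; ring⟩
  · exact h₁ ⟨m, by rw [← hn]; push_cast; ring⟩

noncomputable def rotKernel {k : ℕ} (φ : ℝ) (w v : E k) : ℂ :=
  e (((1 / 2) * (‖w‖ ^ 2 + ‖v‖ ^ 2) * Real.cos φ - ⟪w, v⟫) / Real.sin φ)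

lemma fphi_of_sin_ne_zero {k : ℕ} (f : E k → ℂ) {φ : ℝ} (h₀ : ¬ ∃ m : ℤ, φ = 2 * Real.pi * m)
    (h₁ : ¬ ∃ m : ℤ, φ = Real.pi + 2 * Real.pi * m) (w : E k) :
    fphi f φ w = ((|Real.sin φ| ^ (-(k : ℝ) / 2) : ℝ) : ℂ) * ∫ v, rotKernel φ w v * f v := by
  simp only [fphi, if_neg h₀, if_neg h₁, rotKernel]

lemma exists_rotKernel_mul_W_add_eq {k : ℕ} (f : E k → ℂ) (a b : E k) (c : ℝ) {φ : ℝ}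
    (hφ : Real.sin φ ≠ 0) (w : E k) :
    ∃ C : ℝ, ∀ u : E k, rotKernel φ w (u + b) * W ((a, b), c) f (u + b) =
      e C * (rotKernel φ (w - (Real.cos φ • b + Real.sin φ • a)) u * f u) := by
  set w' := w - (Real.cos φ • b + Real.sin φ • a)
  refine ⟨((1 / 2) * (‖w‖ ^ 2 - ‖w'‖ ^ 2 + ‖b‖ ^ 2) * Real.cos φ - ⟪w, b⟫) / Real.sin φ
    + c + (1 / 2) * ⟪a, b⟫, fun u => ?_⟩
  have hw'u : ⟪w', u⟫ = ⟪w, u⟫ - (Real.cos φ * ⟪b, u⟫ + Real.sin φ * ⟪a, u⟫) := by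
    simp only [w', inner_sub_left, inner_add_left, real_inner_smul_left]
  simp only [rotKernel, W, add_sub_cancel_right, ← mul_assoc, ← e_add]
  congr 2
  rw [norm_add_sq_real, hw'u, inner_add_right, inner_add_right, real_inner_comm b u]
  field_simp
  ring

lemma exists_integral_rotKernel_mul_W_eq {k : ℕ} (f : E k → ℂ) (a b : E k) (c : ℝ) {φ : ℝ}
    (hφ : Real.sin φ ≠ 0) (w : E k) :
    ∃ C : ℝ, ∫ v, rotKernel φ w v * W ((a, b), c) f v =
      e C * ∫ u, rotKernel φ (w - (Real.cos φ • b + Real.sin φ • a)) u * f u := by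
  obtain ⟨C, hC⟩ := exists_rotKernel_mul_W_add_eq f a b c hφ w
  refine ⟨C, ?_⟩
  rw [← integral_add_right_eq_self _ b]
  simp only [hC]
  exact integral_const_mul _ _

lemma norm_fphi_W {k : ℕ} (f : E k → ℂ) (a b : E k) (c φ : ℝ) (w : E k) :
    ‖fphi (W ((a, b), c) f) φ w‖ = ‖fphi f φ (w - (Real.cos φ • b + Real.sin φ • a))‖ := by
  by_cases h₀ : ∃ m : ℤ, φ = 2 * Real.pi * m
  · obtain ⟨hcos, hsin⟩ := cos_sin_of_eq_two_pi_mul h₀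
    simp [fphi, if_pos h₀, W, hcos, hsin, norm_e]
  by_cases h₁ : ∃ m : ℤ, φ = Real.pi + 2 * Real.pi * m
  · obtain ⟨hcos, hsin⟩ := cos_sin_of_eq_pi_add_two_pi_mul h₁
    simp [fphi, if_neg h₀, if_pos h₁, W, hcos, hsin, norm_e, neg_add_eq_sub]
  obtain ⟨C, hC⟩ := exists_integral_rotKernel_mul_W_eq f a b c (sin_ne_zero_of_ne_int_mul_pi h₀ h₁) w
  rw [fphi_of_sin_ne_zero _ h₀ h₁, fphi_of_sin_ne_zero _ h₀ h₁, hC, norm_mul, norm_mul, norm_mul,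
    norm_e, one_mul]

lemma norm_cos_smul_add_sin_smul_sq_le {V : Type*} [SeminormedAddCommGroup V] [NormedSpace ℝ V]
    (φ : ℝ) (a b : V) : ‖Real.cos φ • b + Real.sin φ • a‖ ^ 2 ≤ ‖a‖ ^ 2 + ‖b‖ ^ 2 := by
  have htri : ‖Real.cos φ • b + Real.sin φ • a‖ ≤ |Real.cos φ| * ‖b‖ + |Real.sin φ| * ‖a‖ := by
    simpa only [norm_smul, Real.norm_eq_abs] using norm_add_le (Real.cos φ • b) (Real.sin φ • a)
  -- Cauchy–Schwarz in the plane, with `cos² φ + sin² φ = 1`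
  have hcs : (|Real.cos φ| * ‖b‖ + |Real.sin φ| * ‖a‖) ^ 2 ≤ ‖a‖ ^ 2 + ‖b‖ ^ 2 := by
    nlinarith [sq_nonneg (|Real.cos φ| * ‖a‖ - |Real.sin φ| * ‖b‖), sq_abs (Real.cos φ),
      sq_abs (Real.sin φ), Real.cos_sq_add_sin_sq φ]
  exact (pow_le_pow_left₀ (norm_nonneg _) htri 2).trans hcs

lemma one_add_norm_add_sq_le {V : Type*} [SeminormedAddGroup V] (x y : V) :
    1 + ‖x + y‖ ^ 2 ≤ 2 * (1 + ‖x‖ ^ 2) * (1 + ‖y‖ ^ 2) := by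
  have h : ‖x + y‖ ^ 2 ≤ 2 * (‖x‖ ^ 2 + ‖y‖ ^ 2) :=
    (pow_le_pow_left₀ (norm_nonneg _) (norm_add_le x y) 2).trans add_sq_le
  nlinarith [mul_nonneg (sq_nonneg ‖x‖) (sq_nonneg ‖y‖)]

lemma one_add_norm_sq_rpow_le {V : Type*} [SeminormedAddGroup V] {η r : ℝ} (hη : 0 ≤ η)
    (x d : V) (hd : ‖d‖ ^ 2 ≤ r) :
    (1 + ‖x‖ ^ 2) ^ (η / 2) ≤ 3 ^ η * (1 + r) ^ (η / 2) * (1 + ‖x - d‖ ^ 2) ^ (η / 2) := by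
  have hpeetre : 1 + ‖x‖ ^ 2 ≤ 2 * (1 + r) * (1 + ‖x - d‖ ^ 2) := by
    calc 1 + ‖x‖ ^ 2 = 1 + ‖x - d + d‖ ^ 2 := by rw [sub_add_cancel]
      _ ≤ 2 * (1 + ‖x - d‖ ^ 2) * (1 + ‖d‖ ^ 2) := one_add_norm_add_sq_le (x - d) d
      _ ≤ 2 * (1 + r) * (1 + ‖x - d‖ ^ 2) := by nlinarith [sq_nonneg ‖x - d‖]
  have hr : 0 ≤ 1 + r := by nlinarith [sq_nonneg ‖d‖]
  have htwo : (2 : ℝ) ^ (η / 2) ≤ 3 ^ η :=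
    calc (2 : ℝ) ^ (η / 2) ≤ 3 ^ (η / 2) := by gcongr; norm_num
      _ ≤ 3 ^ η := Real.rpow_le_rpow_of_exponent_le (by norm_num) (by linarith)
  calc (1 + ‖x‖ ^ 2) ^ (η / 2) ≤ (2 * (1 + r) * (1 + ‖x - d‖ ^ 2)) ^ (η / 2) := by gcongr
    _ = 2 ^ (η / 2) * (1 + r) ^ (η / 2) * (1 + ‖x - d‖ ^ 2) ^ (η / 2) := by
      rw [Real.mul_rpow (by positivity) (by positivity), Real.mul_rpow (by norm_num) hr]
    _ ≤ 3 ^ η * (1 + r) ^ (η / 2) * (1 + ‖x - d‖ ^ 2) ^ (η / 2) := by gcongr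

lemma ofReal_weight_mul_norm_fphi_le_kappa {k : ℕ} (η : ℝ) (f : E k → ℂ) (w : E k) (φ : ℝ) :
    ENNReal.ofReal ((1 + ‖w‖ ^ 2) ^ (η / 2) * ‖fphi f φ w‖) ≤ kappa η f :=
  le_iSup₂ (f := fun (w : E k) (φ : ℝ) => ENNReal.ofReal ((1 + ‖w‖ ^ 2) ^ (η / 2) * ‖fphi f φ w‖))
    w φ

theorem kappa_shift_general {k : ℕ} (f : E k → ℂ) (η : ℝ) (hη : 1 < η) (a b : E k) (c : ℝ) :
    kappa η (W ((a, b), c) f) ≤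
      ENNReal.ofReal ((3 : ℝ) ^ η * (1 + ‖a‖ ^ 2 + ‖b‖ ^ 2) ^ (η / 2)) * kappa η f := by
  refine iSup₂_le fun w φ => ?_
  set w' := w - (Real.cos φ • b + Real.sin φ • a)
  have hweight := one_add_norm_sq_rpow_le (by linarith) w _
    (norm_cos_smul_add_sin_smul_sq_le φ a b)
  rw [← add_assoc] at hweight
  calc ENNReal.ofReal ((1 + ‖w‖ ^ 2) ^ (η / 2) * ‖fphi (W ((a, b), c) f) φ w‖)
      ≤ ENNReal.ofReal (3 ^ η * (1 + ‖a‖ ^ 2 + ‖b‖ ^ 2) ^ (η / 2) *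
          ((1 + ‖w'‖ ^ 2) ^ (η / 2) * ‖fphi f φ w'‖)) := by
        rw [norm_fphi_W, ← mul_assoc]
        gcongr
    _ = ENNReal.ofReal (3 ^ η * (1 + ‖a‖ ^ 2 + ‖b‖ ^ 2) ^ (η / 2)) *
          ENNReal.ofReal ((1 + ‖w'‖ ^ 2) ^ (η / 2) * ‖fphi f φ w'‖) :=
        ENNReal.ofReal_mul (by positivity)
    _ ≤ _ := by gcongr; exact ofReal_weight_mul_norm_fphi_le_kappa η f w' φ

/-- `κ_η(W((a,b),c)f) ≤ 3^η (1 + ‖a‖² + ‖b‖²)^{η/2} κ_η(f)`. -/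
theorem kappa_shift {k : ℕ} (hk : 0 < k) (f : E k → ℂ) (hf : Measurable f)
    (η : ℝ) (hη : 1 < η) (hκ : kappa η f < ⊤) (a b : E k) (c : ℝ) :
    kappa η (W ((a, b), c) f) ≤
      ENNReal.ofReal ((3 : ℝ) ^ η * (1 + ‖a‖ ^ 2 + ‖b‖ ^ 2) ^ (η / 2)) * kappa η f :=
  kappa_shift_general f η hη a b c
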